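/- Let τ = (1+√5)/2 be the golden ratio. Then the pair of intervals (K_L, K_S) = ([−1, τ⁻¹], [τ⁻¹, τ]) is the unique pair of nonempty compact subsets of ℝ satisfying K_L = (−τ⁻¹)K_L ∪ (−τ⁻¹)K_S and K_S = (−τ⁻¹)K_L + 1, where αK + β denotes {αx + β : x ∈ K}. -/

import Mathlib

/-!
Substituting `K_S = (−τ⁻¹)K_L + 1` into the first equation makes `K_L` a fixed point of the
Hutchinson operator `C ↦ f C ∪ (f ∘ g) C` of `f x = −τ⁻¹x` and `g x = −τ⁻¹x + 1` on nonempty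
compact sets with the Hausdorff metric. Both maps contract by `τ⁻¹ < 1`, hence so does the operator,
and Banach's fixed point theorem makes `K_L`, and with it `K_S`, unique. That the intervals solve
the system is a direct computation with `τ⁻² = 1 − τ⁻¹`.
-/

/-- The Fibonacci window system: a pair `(K_L, K_S)` of nonempty compact subsets
of `ℝ` with `K_L = (−τ⁻¹)K_L ∪ (−τ⁻¹)K_S` and `K_S = (−τ⁻¹)K_L + 1`. -/
def FibSystem (τ : ℝ) (K : Set ℝ × Set ℝ) : Prop :=
  (IsCompact K.1 ∧ K.1.Nonempty) ∧
  (IsCompact K.2 ∧ K.2.Nonempty) ∧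
  K.1 = (fun x => -τ⁻¹ * x) '' K.1 ∪ (fun x => -τ⁻¹ * x) '' K.2 ∧
  K.2 = (fun x => -τ⁻¹ * x + 1) '' K.1

open Metric Set TopologicalSpace NNReal

section LipschitzImage

variable {α β : Type*} [PseudoEMetricSpace α] [PseudoEMetricSpace β] {K : ℝ≥0} {f : α → β}

theorem LipschitzWith.infEDist_image_le (hf : LipschitzWith K f) (x : α) {t : Set α}
    (ht : t.Nonempty) : infEDist (f x) (f '' t) ≤ K * infEDist x t := by
  have : Nonempty t := ht.to_subtype
  rw [infEDist, infEDist, iInf_image, iInf_subtype', iInf_subtype', ENNReal.mul_iInf (by simp)]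
  exact iInf_mono fun y => hf x y

theorem LipschitzWith.hausdorffEDist_image_le (hf : LipschitzWith K f) {s t : Set α}
    (hs : s.Nonempty) (ht : t.Nonempty) :
    hausdorffEDist (f '' s) (f '' t) ≤ K * hausdorffEDist s t := by
  apply hausdorffEDist_le_of_infEDist
  · rintro _ ⟨x, hx, rfl⟩
    grw [hf.infEDist_image_le x ht, infEDist_le_hausdorffEDist_of_mem hx]
  · rintro _ ⟨x, hx, rfl⟩
    grw [hf.infEDist_image_le x hs, infEDist_le_hausdorffEDist_of_mem hx, hausdorffEDist_comm]

end LipschitzImage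

section Hutchinson

variable {α β : Type*} [EMetricSpace α] [EMetricSpace β] {K : ℝ≥0} {f : α → β}

theorem LipschitzWith.nonemptyCompacts_map (hf : LipschitzWith K f) :
    LipschitzWith K (NonemptyCompacts.map f hf.continuous) := fun C D =>
  hf.hausdorffEDist_image_le C.nonempty D.nonempty

theorem NonemptyCompacts.contractingWith_map_sup {f g : α → α} (hK : K < 1)
    (hf : LipschitzWith K f) (hg : LipschitzWith K g) :
    ContractingWith K fun C : NonemptyCompacts α =>
      C.map f hf.continuous ⊔ C.map g hg.continuous := by
  refine ⟨hK, ?_⟩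
  have := NonemptyCompacts.lipschitz_sup.comp
    (hf.nonemptyCompacts_map.prodMk hg.nonemptyCompacts_map)
  rwa [one_mul, max_self] at this

end Hutchinson

theorem Set.image_affine_Icc_of_neg {𝕜 : Type*} [Field 𝕜] [LinearOrder 𝕜]
    [IsStrictOrderedRing 𝕜] {c : 𝕜} (hc : c < 0) (d a b : 𝕜) :
    (fun x => c * x + d) '' Icc a b = Icc (c * b + d) (c * a + d) := by
  have : (fun x => c * x + d) = (fun y => -c * y + d) ∘ Neg.neg := by ext; simp
  rw [this, image_comp, image_neg_eq_neg, neg_Icc, image_affine_Icc' (neg_pos.2 hc)]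
  simp

theorem Set.image_mul_left_Icc_of_neg {𝕜 : Type*} [Field 𝕜] [LinearOrder 𝕜]
    [IsStrictOrderedRing 𝕜] {c : 𝕜} (hc : c < 0) (a b : 𝕜) :
    (fun x => c * x) '' Icc a b = Icc (c * b) (c * a) := by
  simpa using image_affine_Icc_of_neg hc 0 a b

theorem lipschitzWith_mul_left_add {R : Type*} [SeminormedRing R] (a b : R) :
    LipschitzWith ‖a‖₊ fun x => a * x + b :=
  LipschitzWith.of_dist_le_mul fun x y => by
    simpa [dist_eq_norm, ← mul_sub] using norm_mul_le a (x - y)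

theorem FibSystem.fst_eq_union_comp {τ : ℝ} {K : Set ℝ × Set ℝ} (h : FibSystem τ K) :
    K.1 = (fun x => -τ⁻¹ * x) '' K.1 ∪
      ((fun x => -τ⁻¹ * x) ∘ fun x => -τ⁻¹ * x + 1) '' K.1 := by
  rw [image_comp, ← h.2.2.2]
  exact h.2.2.1

theorem FibSystem.unique {τ : ℝ} (hτ : 1 < |τ|) {K K' : Set ℝ × Set ℝ} (hK : FibSystem τ K)
    (hK' : FibSystem τ K') : K = K' := by
  have hc : ‖-τ⁻¹‖₊ < 1 := by
    rw [← NNReal.coe_lt_coe, coe_nnnorm, norm_neg, norm_inv, Real.norm_eq_abs]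
    exact inv_lt_one_of_one_lt₀ hτ
  have hf : LipschitzWith ‖-τ⁻¹‖₊ fun x : ℝ => -τ⁻¹ * x := lipschitzWith_smul _
  have hfh : LipschitzWith ‖-τ⁻¹‖₊ ((fun x : ℝ => -τ⁻¹ * x) ∘ fun x => -τ⁻¹ * x + 1) :=
    (hf.comp (lipschitzWith_mul_left_add _ 1)).weaken (mul_le_of_le_one_left (by positivity) hc.le)
  have hfix : ∀ {L} (h : FibSystem τ L), Function.IsFixedPt
      (fun C : NonemptyCompacts ℝ => C.map _ hf.continuous ⊔ C.map _ hfh.continuous)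
      ⟨⟨L.1, h.1.1⟩, h.1.2⟩ := fun h => NonemptyCompacts.ext h.fst_eq_union_comp.symm
  have hfst : K.1 = K'.1 := congrArg (fun C : NonemptyCompacts ℝ => (C : Set ℝ))
    ((NonemptyCompacts.contractingWith_map_sup hc hf hfh).fixedPoint_unique' (hfix hK) (hfix hK'))
  exact Prod.ext hfst (by rw [hK.2.2.2, hK'.2.2.2, hfst])

theorem fibSystem_Icc {τ : ℝ} (hτ : τ ^ 2 = τ + 1) (hpos : 0 < τ) :
    FibSystem τ (Icc (-1) τ⁻¹, Icc τ⁻¹ τ) := by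
  have hτt : τ = τ⁻¹ + 1 := by field_simp; linear_combination hτ
  have htt : τ⁻¹ * τ⁻¹ = 1 - τ⁻¹ := by field_simp; linear_combination -hτ
  have ht : 0 < τ⁻¹ := inv_pos.2 hpos
  unfold FibSystem
  set t := τ⁻¹
  rw [hτt]
  have hc : -t < 0 := neg_neg_of_pos ht
  refine ⟨⟨isCompact_Icc, nonempty_Icc.2 (by linarith)⟩,
    ⟨isCompact_Icc, nonempty_Icc.2 (by linarith)⟩, ?_, ?_⟩
  · dsimp only
    rw [image_mul_left_Icc_of_neg hc, image_mul_left_Icc_of_neg hc, union_comm,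
      show -t * (t + 1) = -1 by linear_combination -htt,
      show -t * t = t - 1 by linear_combination -htt,
      Icc_union_Icc_eq_Icc (by linarith) (by linarith), neg_mul_neg, mul_one]
  · dsimp only
    rw [image_affine_Icc_of_neg hc, show -t * t + 1 = t by linear_combination -htt, neg_mul_neg,
      mul_one]

/-- For `τ = (1+√5)/2` the golden ratio, the pair of intervals
`([−1, τ⁻¹], [τ⁻¹, τ])` is the unique pair of nonempty compact subsets of `ℝ`
satisfying `K_L = (−τ⁻¹)K_L ∪ (−τ⁻¹)K_S` and `K_S = (−τ⁻¹)K_L + 1`. -/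
theorem fibonacci_window (τ : ℝ) (hτ : τ = (1 + Real.sqrt 5) / 2) :
    FibSystem τ (Set.Icc (-1) τ⁻¹, Set.Icc τ⁻¹ τ) ∧
    ∀ K : Set ℝ × Set ℝ, FibSystem τ K →
      K = (Set.Icc (-1) τ⁻¹, Set.Icc τ⁻¹ τ) := by
  have hφ : τ = Real.goldenRatio := hτ
  have hwindows := fibSystem_Icc (hφ ▸ Real.goldenRatio_sq) (hφ ▸ Real.goldenRatio_pos)
  have hτ_abs : 1 < |τ| := by
    rw [hφ, abs_of_pos Real.goldenRatio_pos]
    exact Real.one_lt_goldenRatio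
  exact ⟨hwindows, fun K hK => hK.unique hτ_abs hwindows⟩
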